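/- Let f* : [−π, π] → ℝ be defined by f*(t) = π²/4 − t² for t ∈ [−π/2, π/2] and f*(t) = 0 for t ∈ [−π, −π/2) ∪ (π/2, π], with Fourier coefficients f̂*(k) = (1/(2π)) ∫_{−π}^{π} f*(t) exp(−ikt) dt. For m ∈ ℕ define V_k = f̂*(0) if k = 0, V_k = 2 f̂*(k) if 1 ≤ k ≤ m, and V_k = 2 ((2m − k + 1)/(m + 1)) f̂*(k) if m + 1 ≤ k ≤ 2m. Then for every m ≥ 1 one has min_{0 ≤ k ≤ 2m} |V_k| ≥ 1/(4π m³ (m + 1)); in particular min_{0 ≤ k ≤ 2m} |V_k| decays at most polynomially in m. -/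

import Mathlib

/-!
For `k ≠ 0` the coefficient `f̂*(k)` is computed in closed form: an explicit primitive of
`(a² - t²) e^{-ikt}` gives `k³ ∫_{-a}^{a} (a² - t²) e^{-ikt} dt = 4 (sin ka - a k cos ka)`.
At `a = π/2`, `2 sin (kπ/2) cos (kπ/2) = sin kπ = 0`, so one of them vanishes and the other
is `±1`, which yields `|f̂*(k)| ≥ 2 / (π |k|³)`. The de la Vallée Poussin weights are at least
`1/(m+1)`, so `|V_k| ≥ 4 / (π (m+1) k³)` for `1 ≤ k ≤ 2m`, while `V_0 = f̂*(0) = π²/12`.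
-/

open MeasureTheory

/-- The function `f*(t) = π²/4 - t²` on `[-π/2, π/2]`, extended by `0`. -/
noncomputable def fstar (t : ℝ) : ℝ :=
  if |t| ≤ Real.pi / 2 then Real.pi ^ 2 / 4 - t ^ 2 else 0

/-- The `k`-th Fourier coefficient `f̂*(k) = (1/(2π)) ∫_{-π}^{π} f*(t) exp(-ikt) dt`. -/
noncomputable def fstarFourierCoeff (k : ℤ) : ℂ :=
  (1 / (2 * (Real.pi : ℂ))) *
    ∫ t in (-Real.pi)..Real.pi, (fstar t : ℂ) * Complex.exp (-Complex.I * (k : ℂ) * (t : ℂ))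

/-- The coefficients of the de la Vallée Poussin type operator: `V 0 = f̂*(0)`,
`V k = 2 f̂*(k)` for `1 ≤ k ≤ m`, and `V k = 2 ((2m - k + 1)/(m + 1)) f̂*(k)` for
`m + 1 ≤ k ≤ 2m`. -/
noncomputable def Vcoeff (m k : ℕ) : ℂ :=
  if k = 0 then fstarFourierCoeff 0
  else if k ≤ m then 2 * fstarFourierCoeff (k : ℤ)
  else 2 * (((2 * m - k + 1 : ℕ) : ℂ) / ((m : ℂ) + 1)) * fstarFourierCoeff (k : ℤ)

open Complex Set

theorem intervalIntegral_indicator_Icc {E : Type*} [NormedAddCommGroup E] [NormedSpace ℝ E]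
    {a b c d : ℝ} (hac : a < c) (hcd : c ≤ d) (hdb : d ≤ b) (g : ℝ → E) :
    ∫ t in a..b, (Icc c d).indicator g t = ∫ t in c..d, g t := by
  rw [intervalIntegral.integral_of_le (hac.le.trans (hcd.trans hdb)),
    setIntegral_indicator measurableSet_Icc, inter_eq_right.mpr (Icc_subset_Ioc hac hdb),
    integral_Icc_eq_integral_Ioc, ← intervalIntegral.integral_of_le hcd]

theorem hasDerivAt_parabola_fourier_primitive (K : ℂ) (a t : ℝ) :
    HasDerivAt
      (fun t : ℝ => cexp (-I * K * t) * (I * K ^ 2 * (a ^ 2 - t ^ 2) + 2 * I - 2 * t * K))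
      (K ^ 3 * ((a ^ 2 - t ^ 2 : ℝ) : ℂ) * cexp (-I * K * t)) t := by
  have hexp : HasDerivAt (fun t : ℝ => cexp (-I * K * t)) (-I * K * cexp (-I * K * t)) t := by
    simpa [mul_comm] using (((hasDerivAt_id (t : ℂ)).const_mul (-I * K)).cexp).comp_ofReal
  have hpoly : HasDerivAt (fun t : ℝ => I * K ^ 2 * (a ^ 2 - (t : ℂ) ^ 2) + 2 * I - 2 * t * K)
      (-2 * I * K ^ 2 * t - 2 * K) t := by
    have hid : HasDerivAt (fun t : ℝ => (t : ℂ)) 1 t := (hasDerivAt_id t).ofReal_comp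
    exact ((((hid.pow 2).const_sub ((a : ℂ) ^ 2)).const_mul (I * K ^ 2)).add_const (2 * I)).sub
      ((hid.const_mul 2).mul_const K) |>.congr_deriv (by push_cast; ring)
  refine (hexp.mul hpoly).congr_deriv ?_
  push_cast
  linear_combination (K ^ 3 * ((t : ℂ) ^ 2 - a ^ 2) - 2 * K) * cexp (-I * K * t) * I_sq

theorem integral_parabola_mul_exp {K : ℂ} (hK : K ≠ 0) (a : ℝ) :
    ∫ t in -a..a, ((a ^ 2 - t ^ 2 : ℝ) : ℂ) * cexp (-I * K * t)
      = 4 * (sin (K * a) - a * K * cos (K * a)) / K ^ 3 := by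
  rw [eq_div_iff (pow_ne_zero 3 hK), mul_comm, ← intervalIntegral.integral_const_mul]
  simp_rw [← mul_assoc]
  rw [intervalIntegral.integral_eq_sub_of_hasDerivAt
    (fun t _ => hasDerivAt_parabola_fourier_primitive K a t)
    (by apply Continuous.intervalIntegrable; fun_prop)]
  have hminus : cexp (-I * K * a) = cos (K * a) - sin (K * a) * I := by
    rw [show -I * K * a = -(K * a) * I by ring, exp_mul_I, cos_neg, sin_neg]; ring
  have hplus : cexp (-I * K * (-a : ℝ)) = cos (K * a) + sin (K * a) * I := by
    rw [show -I * K * (-a : ℝ) = (K * a) * I by push_cast; ring, exp_mul_I]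
  rw [hminus, hplus]
  push_cast
  linear_combination (-4 * sin (K * a)) * I_sq

theorem integral_parabola (a : ℝ) :
    ∫ t in -a..a, ((a ^ 2 - t ^ 2 : ℝ) : ℂ) = ((4 * a ^ 3 / 3 : ℝ) : ℂ) := by
  rw [intervalIntegral.integral_ofReal, intervalIntegral.integral_sub intervalIntegrable_const
    (by apply Continuous.intervalIntegrable; fun_prop), integral_pow]
  norm_num
  ring

theorem fstarFourierCoeff_eq_integral_parabola (k : ℤ) :
    fstarFourierCoeff k = 1 / (2 * (Real.pi : ℂ)) *
      ∫ t in -(Real.pi / 2)..(Real.pi / 2),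
        (((Real.pi / 2) ^ 2 - t ^ 2 : ℝ) : ℂ) * cexp (-I * k * t) := by
  have hpi := Real.pi_pos
  rw [fstarFourierCoeff, ← intervalIntegral_indicator_Icc (a := -Real.pi) (b := Real.pi)
    (c := -(Real.pi / 2)) (d := Real.pi / 2)
    (by linarith) (by linarith) (by linarith)]
  congr 2
  funext t
  simp only [fstar, indicator, mem_Icc, ← abs_le]
  split_ifs
  · push_cast; ring
  · simp

theorem fstarFourierCoeff_zero : fstarFourierCoeff 0 = ((Real.pi ^ 2 / 12 : ℝ) : ℂ) := by
  have hpi : (Real.pi : ℂ) ≠ 0 := ofReal_ne_zero.mpr Real.pi_ne_zero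
  simp only [fstarFourierCoeff_eq_integral_parabola, Int.cast_zero, mul_zero, zero_mul,
    Complex.exp_zero, mul_one, integral_parabola]
  push_cast
  field_simp
  ring

theorem fstarFourierCoeff_of_ne_zero {k : ℤ} (hk : k ≠ 0) :
    fstarFourierCoeff k = ((2 * (Real.sin (k * (Real.pi / 2)) -
      Real.pi / 2 * k * Real.cos (k * (Real.pi / 2))) / (Real.pi * k ^ 3) : ℝ) : ℂ) := by
  have hpi : (Real.pi : ℂ) ≠ 0 := ofReal_ne_zero.mpr Real.pi_ne_zero
  have hkC : (k : ℂ) ≠ 0 := Int.cast_ne_zero.mpr hk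
  rw [fstarFourierCoeff_eq_integral_parabola, integral_parabola_mul_exp hkC]
  push_cast
  field_simp
  ring

theorem min_abs_le_abs_mul_sin_sub_mul_cos {x : ℝ} (hx : Real.sin (2 * x) = 0) (α β : ℝ) :
    min |α| |β| ≤ |α * Real.sin x - β * Real.cos x| := by
  have hsq := Real.sin_sq_add_cos_sq x
  have hx' : Real.sin x * Real.cos x = 0 := by
    rw [Real.sin_two_mul] at hx
    linear_combination hx / 2
  rcases mul_eq_zero.mp hx' with h | h
  · have hcos : |Real.cos x| = 1 := by
      simpa using (sq_eq_sq_iff_abs_eq_abs (Real.cos x) 1).mp (by rw [h] at hsq; linarith)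
    rw [h, mul_zero, zero_sub, abs_neg, abs_mul, hcos, mul_one]
    exact min_le_right _ _
  · have hsin : |Real.sin x| = 1 := by
      simpa using (sq_eq_sq_iff_abs_eq_abs (Real.sin x) 1).mp (by rw [h] at hsq; linarith)
    rw [h, mul_zero, sub_zero, abs_mul, hsin, mul_one]
    exact min_le_left _ _

theorem norm_fstarFourierCoeff_ge {k : ℤ} (hk : k ≠ 0) :
    2 / (Real.pi * |(k : ℝ)| ^ 3) ≤ ‖fstarFourierCoeff k‖ := by
  have hpi := Real.pi_pos
  have hk1 : 1 ≤ |(k : ℝ)| := by exact_mod_cast Int.one_le_abs hk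
  have hsin : Real.sin (2 * (k * (Real.pi / 2))) = 0 := by
    rw [show 2 * (k * (Real.pi / 2)) = k * Real.pi by ring, Real.sin_int_mul_pi]
  have key := min_abs_le_abs_mul_sin_sub_mul_cos hsin 1 (Real.pi / 2 * k)
  rw [abs_one, one_mul, abs_mul, abs_of_pos (by positivity : 0 < Real.pi / 2),
    min_eq_left (by nlinarith [Real.pi_gt_three])] at key
  rw [fstarFourierCoeff_of_ne_zero hk, norm_real, Real.norm_eq_abs, abs_div, abs_mul, abs_two,
    abs_mul, abs_pow, abs_of_pos hpi]
  gcongr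
  linarith

theorem norm_Vcoeff_zero (m : ℕ) : ‖Vcoeff m 0‖ = Real.pi ^ 2 / 12 := by
  rw [Vcoeff, if_pos rfl, fstarFourierCoeff_zero, norm_real, Real.norm_eq_abs,
    abs_of_pos (by positivity)]

theorem norm_Vcoeff_ge {m k : ℕ} (hk0 : k ≠ 0) :
    2 / ((m : ℝ) + 1) * ‖fstarFourierCoeff k‖ ≤ ‖Vcoeff m k‖ := by
  rw [Vcoeff, if_neg hk0]
  split_ifs with hkm
  · rw [norm_mul, Complex.norm_two]
    gcongr
    exact div_le_self zero_le_two (by simp)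
  · have hn : (1 : ℝ) ≤ (2 * m - k + 1 : ℕ) := by exact_mod_cast Nat.le_add_left 1 _
    have hnorm : ‖(m : ℂ) + 1‖ = m + 1 := by exact_mod_cast Complex.norm_natCast (m + 1)
    rw [norm_mul, norm_mul, Complex.norm_two, norm_div, Complex.norm_natCast, hnorm,
      mul_div_assoc']
    gcongr
    linarith

/-- For every `m ≥ 1` one has
`min_{0 ≤ k ≤ 2m} |V_k| ≥ 1/(4π m³ (m+1))`; in particular the minimum decays at most
polynomially in `m`. -/
theorem vallee_poussin_coefficient_lower_bound (m : ℕ) (hm : 1 ≤ m) :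
    ∀ k : ℕ, k ≤ 2 * m →
      1 / (4 * Real.pi * (m : ℝ) ^ 3 * ((m : ℝ) + 1)) ≤ ‖Vcoeff m k‖ := by
  intro k hk
  have hpi : 3 < Real.pi := Real.pi_gt_three
  have hm1 : (1 : ℝ) ≤ m := by exact_mod_cast hm
  have hm3 : (0 : ℝ) < m ^ 3 := by positivity
  rcases eq_or_ne k 0 with rfl | hk0
  · rw [norm_Vcoeff_zero]
    calc 1 / (4 * Real.pi * (m : ℝ) ^ 3 * ((m : ℝ) + 1)) ≤ 1 / 12 := by
          have : (1 : ℝ) ≤ m ^ 3 * (m + 1) :=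
            one_le_mul_of_one_le_of_one_le (one_le_pow₀ hm1) (by linarith)
          gcongr
          nlinarith
      _ ≤ Real.pi ^ 2 / 12 := by gcongr; nlinarith
  · have hk1 : (0 : ℝ) < k := by exact_mod_cast Nat.pos_of_ne_zero hk0
    have hk2m : (k : ℝ) ≤ 2 * m := by exact_mod_cast hk
    have hcoeff := norm_fstarFourierCoeff_ge (Int.natCast_ne_zero.mpr hk0)
    rw [Int.cast_natCast, abs_of_pos hk1] at hcoeff
    calc 1 / (4 * Real.pi * (m : ℝ) ^ 3 * ((m : ℝ) + 1))
        ≤ 2 / ((m : ℝ) + 1) * (2 / (Real.pi * (2 * m) ^ 3)) := by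
          rw [div_mul_div_comm, div_le_div_iff₀ (by positivity) (by positivity)]
          nlinarith [mul_pos (mul_pos Real.pi_pos hm3) (by positivity : (0 : ℝ) < m + 1)]
      _ ≤ 2 / ((m : ℝ) + 1) * (2 / (Real.pi * k ^ 3)) := by gcongr
      _ ≤ 2 / ((m : ℝ) + 1) * ‖fstarFourierCoeff k‖ := by gcongr
      _ ≤ ‖Vcoeff m k‖ := norm_Vcoeff_ge hk0
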